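/- Let m ∈ Hol(𝔻). The multiplication operator M_m(f) = m f on Hol(𝔻) is similar to a linear isometry of Hol(𝔻) if and only if m is a constant of modulus 1. -/

import Mathlib

open Metric Complex Set

/-- The sup seminorm `‖f‖_{∞,r} = sup_{|z| ≤ r} |f(z)|`. -/
noncomputable def supNorm (r : ℝ) (f : ℂ → ℂ) : ℝ :=
  ⨆ z : Metric.closedBall (0:ℂ) r, ‖f (z : ℂ)‖

/-- `Hol(𝔻)`: the space of holomorphic functions on the open unit disc,
as a submodule of `ℂ → ℂ`. -/
noncomputable def HolD : Submodule ℂ (ℂ → ℂ) where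
  carrier := {f | DifferentiableOn ℂ f (Metric.ball 0 1)}
  add_mem' := fun hf hg => hf.add hg
  zero_mem' := differentiableOn_const 0
  smul_mem' := fun c _ hf => hf.const_smul c

/-- The multiplication operator `M_m : f ↦ m f` on `Hol(𝔻)`. -/
noncomputable def mulOp (m : ℂ → ℂ) (hm : DifferentiableOn ℂ m (Metric.ball 0 1)) :
    HolD →ₗ[ℂ] HolD where
  toFun f := ⟨fun z => m z * f.1 z, hm.mul f.2⟩
  map_add' _ _ := Subtype.ext (funext fun _ => mul_add _ _ _)
  map_smul' _ _ := Subtype.ext (funext fun _ => mul_left_comm _ _ _)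

/-!
If `T = U⁻¹ M_m U` preserves every seminorm, so does `Tⁿ = U⁻¹ M_mⁿ U`. Continuity of `U` then
bounds `|m(z)|ⁿ` uniformly in `n`, so `|m| ≤ 1` on `𝔻`; continuity of `U⁻¹` forces
`sup_{|z| ≤ s} |m| ≥ 1` on some subdisc, so `|m|` attains its maximum `1` inside `𝔻`, and by the
maximum modulus principle `m` is constant.
-/

section Archimedean

variable {𝕜 : Type*} [Field 𝕜] [LinearOrder 𝕜] [IsStrictOrderedRing 𝕜] [Archimedean 𝕜]

lemma le_one_of_forall_pow_le {a K : 𝕜} (h : ∀ n : ℕ, a ^ n ≤ K) : a ≤ 1 := by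
  by_contra! ha
  obtain ⟨n, hn⟩ := pow_unbounded_of_one_lt K ha
  exact (h n).not_gt hn

lemma one_le_of_forall_one_le_mul_pow {q K : 𝕜} (hq : 0 ≤ q) (h : ∀ n : ℕ, 1 ≤ K * q ^ n) :
    1 ≤ q := by
  rcases hq.eq_or_lt with rfl | hq
  · simpa using h 1
  · refine (inv_le_one₀ hq).1 <| le_one_of_forall_pow_le (K := K) fun n => ?_
    rw [inv_pow, inv_le_iff_one_le_mul₀ (pow_pos hq n)]
    exact h n

end Archimedean

section SupNorm

variable {r : ℝ} {f g : ℂ → ℂ}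

lemma supNorm_nonneg (r : ℝ) (f : ℂ → ℂ) : 0 ≤ supNorm r f :=
  Real.iSup_nonneg fun _ => norm_nonneg _

lemma norm_le_supNorm (hf : ContinuousOn f (closedBall 0 r)) {z : ℂ}
    (hz : z ∈ closedBall (0:ℂ) r) : ‖f z‖ ≤ supNorm r f := by
  have hbdd := (isCompact_closedBall (0:ℂ) r).bddAbove_image (continuous_norm.comp_continuousOn hf)
  rw [image_eq_range] at hbdd
  exact le_ciSup hbdd (⟨z, hz⟩ : closedBall (0:ℂ) r)

lemma supNorm_le (hr : 0 ≤ r) {B : ℝ} (h : ∀ z ∈ closedBall (0:ℂ) r, ‖f z‖ ≤ B) :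
    supNorm r f ≤ B :=
  have : Nonempty (closedBall (0:ℂ) r) := (nonempty_closedBall.2 hr).to_subtype
  ciSup_le fun z => h z z.2

lemma supNorm_const (hr : 0 ≤ r) (c : ℂ) : supNorm r (fun _ => c) = ‖c‖ :=
  have : Nonempty (closedBall (0:ℂ) r) := (nonempty_closedBall.2 hr).to_subtype
  ciSup_const

lemma supNorm_congr_norm (h : ∀ z ∈ closedBall (0:ℂ) r, ‖f z‖ = ‖g z‖) :
    supNorm r f = supNorm r g :=
  iSup_congr fun z => h z z.2

lemma supNorm_pow_mul_le (hr : 0 ≤ r) (hf : ContinuousOn f (closedBall 0 r))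
    (hg : ContinuousOn g (closedBall 0 r)) (n : ℕ) :
    supNorm r (fun z => f z ^ n * g z) ≤ supNorm r f ^ n * supNorm r g :=
  supNorm_le hr fun z hz => by
    rw [norm_mul, norm_pow]
    exact mul_le_mul (pow_le_pow_left₀ (norm_nonneg _) (norm_le_supNorm hf hz) n)
      (norm_le_supNorm hg hz) (norm_nonneg _) (pow_nonneg (supNorm_nonneg r f) n)

lemma exists_norm_eq_supNorm (hr : 0 ≤ r) (hf : ContinuousOn f (closedBall 0 r)) :
    ∃ w ∈ closedBall (0:ℂ) r, ‖f w‖ = supNorm r f := by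
  obtain ⟨w, hw, hmax⟩ := (isCompact_closedBall (0:ℂ) r).exists_isMaxOn
    (nonempty_closedBall.2 hr) (continuous_norm.comp_continuousOn hf)
  exact ⟨w, hw, le_antisymm (norm_le_supNorm hf hw) (supNorm_le hr fun z hz => hmax hz)⟩

end SupNorm

lemma continuousOn_closedBall_of_differentiableOn_ball {f : ℂ → ℂ}
    (hf : DifferentiableOn ℂ f (ball 0 1)) {r : ℝ} (hr : r < 1) :
    ContinuousOn f (closedBall 0 r) :=
  hf.continuousOn.mono (closedBall_subset_ball hr)

lemma coe_mulOp_pow_apply (m : ℂ → ℂ) (hm : DifferentiableOn ℂ m (ball 0 1)) (n : ℕ)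
    (g : HolD) : ((mulOp m hm ^ n) g).1 = fun z => m z ^ n * g.1 z := by
  induction n with
  | zero => simp
  | succ n ih =>
    rw [pow_succ', Module.End.mul_apply]
    funext z
    change m z * ((mulOp m hm ^ n) g).1 z = _
    rw [ih, pow_succ']
    ring

/-- Continuity of an operator on the Fréchet space `Hol(𝔻)`. -/
def IsSupNormBounded (T : Module.End ℂ HolD) : Prop :=
  ∀ r : ℝ, 0 < r → r < 1 → ∃ C s : ℝ, 0 < s ∧ s < 1 ∧ 0 ≤ C ∧
    ∀ f : HolD, supNorm r (T f).1 ≤ C * supNorm s f.1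

def PreservesSupNorms (T : Module.End ℂ HolD) : Prop :=
  ∀ (f : HolD) (r : ℝ), 0 < r → r < 1 → supNorm r (T f).1 = supNorm r f.1

lemma isSupNormBounded_id : IsSupNormBounded LinearMap.id :=
  fun r hr0 hr1 => ⟨1, r, hr0, hr1, zero_le_one, fun _ => (one_mul _).ge⟩

lemma PreservesSupNorms.pow {T : Module.End ℂ HolD} (hT : PreservesSupNorms T) (n : ℕ) :
    PreservesSupNorms (T ^ n) := by
  induction n with
  | zero => exact fun f r _ _ => rfl
  | succ n ih =>
    intro f r hr0 hr1
    rw [pow_succ', Module.End.mul_apply, hT _ r hr0 hr1, ih f r hr0 hr1]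

lemma PreservesSupNorms.conj_pow_apply {A : Module.End ℂ HolD} {U : HolD ≃ₗ[ℂ] HolD}
    (hA : PreservesSupNorms (U.symm.conjRingEquiv A)) (n : ℕ) (f : HolD) {r : ℝ}
    (hr0 : 0 < r) (hr1 : r < 1) :
    supNorm r (U.symm ((A ^ n) (U f))).1 = supNorm r f.1 := by
  rw [← hA.pow n f r hr0 hr1, ← map_pow]
  rfl

lemma preservesSupNorms_mulOp {m : ℂ → ℂ} (hm : DifferentiableOn ℂ m (ball 0 1))
    (h : ∀ z ∈ ball (0:ℂ) 1, ‖m z‖ = 1) : PreservesSupNorms (mulOp m hm) :=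
  fun f _ _ hr1 => supNorm_congr_norm fun z hz => by
    change ‖m z * f.1 z‖ = _
    rw [norm_mul, h z (closedBall_subset_ball hr1 hz), one_mul]

section Similarity

variable {m : ℂ → ℂ} {hm : DifferentiableOn ℂ m (ball 0 1)} {U : HolD ≃ₗ[ℂ] HolD}

lemma norm_le_one_of_conj_preservesSupNorms (hU : IsSupNormBounded U.toLinearMap)
    (hT : PreservesSupNorms (U.symm.conjRingEquiv (mulOp m hm))) :
    ∀ z ∈ ball (0:ℂ) 1, ‖m z‖ ≤ 1 := by
  intro z hz
  obtain ⟨r, hzr, hr1⟩ := exists_between (mem_ball_zero_iff.1 hz)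
  obtain ⟨C, s, hs0, hs1, -, hC⟩ := hU r ((norm_nonneg z).trans_lt hzr) hr1
  let one : HolD := ⟨fun _ => 1, differentiableOn_const 1⟩
  refine le_one_of_forall_pow_le (K := C * supNorm s (U.symm one).1) fun n => ?_
  calc ‖m z‖ ^ n = ‖((mulOp m hm ^ n) one).1 z‖ := by
        simp [coe_mulOp_pow_apply, one]
    _ ≤ supNorm r ((mulOp m hm ^ n) one).1 :=
        norm_le_supNorm (continuousOn_closedBall_of_differentiableOn_ball
          ((mulOp m hm ^ n) one).2 hr1) (mem_closedBall_zero_iff.2 hzr.le)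
    _ = supNorm r (U (U.symm ((mulOp m hm ^ n) (U (U.symm one))))).1 := by
        simp only [LinearEquiv.apply_symm_apply]
    _ ≤ C * supNorm s (U.symm one).1 := by
        rw [← hT.conj_pow_apply n (U.symm one) hs0 hs1]
        exact hC _

lemma exists_one_le_supNorm_of_conj_preservesSupNorms (hUs : IsSupNormBounded U.symm.toLinearMap)
    (hT : PreservesSupNorms (U.symm.conjRingEquiv (mulOp m hm))) :
    ∃ s, 0 < s ∧ s < 1 ∧ 1 ≤ supNorm s m := by
  obtain ⟨C, s, hs0, hs1, hC0, hC⟩ := hUs (1 / 2) (by norm_num) (by norm_num)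
  let g : HolD := U ⟨fun _ => 1, differentiableOn_const 1⟩
  refine ⟨s, hs0, hs1, one_le_of_forall_one_le_mul_pow (supNorm_nonneg s m)
    (K := C * supNorm s g.1) fun n => ?_⟩
  calc (1 : ℝ) = supNorm (1 / 2) (U.symm ((mulOp m hm ^ n) g)).1 := by
        rw [hT.conj_pow_apply n _ (by norm_num) (by norm_num)]
        simpa using (supNorm_const (r := 1 / 2) (by norm_num) 1).symm
    _ ≤ C * supNorm s ((mulOp m hm ^ n) g).1 := hC _
    _ ≤ C * (supNorm s m ^ n * supNorm s g) := by
        rw [coe_mulOp_pow_apply]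
        gcongr
        exact supNorm_pow_mul_le hs0.le (continuousOn_closedBall_of_differentiableOn_ball hm hs1)
          (continuousOn_closedBall_of_differentiableOn_ball g.2 hs1) n
    _ = C * supNorm s g * supNorm s m ^ n := by ring

end Similarity

/-- the multiplication operator `M_m` on `Hol(𝔻)` is similar to
a linear isometry of `Hol(𝔻)` (i.e. `U⁻¹ M_m U` preserves all seminorms for
some invertible continuous linear `U`) iff `m` is a constant of modulus 1. -/
theorem multiplication_similar_to_isometry_iff_unimodular_constant
    (m : ℂ → ℂ) (hm : DifferentiableOn ℂ m (Metric.ball 0 1)) :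
    (∃ U : HolD ≃ₗ[ℂ] HolD,
      (∀ r : ℝ, 0 < r → r < 1 → ∃ C s : ℝ, 0 < s ∧ s < 1 ∧ 0 ≤ C ∧
        ∀ f : HolD, supNorm r (U f).1 ≤ C * supNorm s f.1) ∧
      (∀ r : ℝ, 0 < r → r < 1 → ∃ C s : ℝ, 0 < s ∧ s < 1 ∧ 0 ≤ C ∧
        ∀ f : HolD, supNorm r (U.symm f).1 ≤ C * supNorm s f.1) ∧
      ∀ (f : HolD) (r : ℝ), 0 < r → r < 1 →
        supNorm r ((U.symm (mulOp m hm (U f))).1) = supNorm r f.1)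
    ↔ (∃ c : ℂ, ‖c‖ = 1 ∧ ∀ z ∈ Metric.ball (0:ℂ) 1, m z = c) := by
  constructor
  · rintro ⟨U, hU, hUs, hT⟩
    have hle := norm_le_one_of_conj_preservesSupNorms (U := U) hU hT
    obtain ⟨s, hs0, hs1, hs⟩ := exists_one_le_supNorm_of_conj_preservesSupNorms (U := U) hUs hT
    obtain ⟨w, hws, hmw⟩ :=
      exists_norm_eq_supNorm hs0.le (continuousOn_closedBall_of_differentiableOn_ball hm hs1)
    have hw : w ∈ ball (0:ℂ) 1 := closedBall_subset_ball hs1 hws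
    have hw1 : ‖m w‖ = 1 := le_antisymm (hle w hw) (hmw ▸ hs)
    have hmax : IsMaxOn (norm ∘ m) (ball 0 1) w :=
      isMaxOn_iff.2 fun z hz => (hle z hz).trans hw1.ge
    exact ⟨m w, hw1, Complex.eqOn_of_isPreconnected_of_isMaxOn_norm
      (convex_ball 0 1).isPreconnected isOpen_ball hm hw hmax⟩
  · rintro ⟨c, hc, hmc⟩
    refine ⟨LinearEquiv.refl ℂ HolD, isSupNormBounded_id, isSupNormBounded_id,
      preservesSupNorms_mulOp hm fun z hz => ?_⟩
    rw [hmc z hz, hc]
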